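/- arXiv:1307.5231 — 5 statements merged into one kernel-verified Lean document; each statement's English description precedes it below -/
import Mathlib

section
/- Let K ≥ 2 and let λ₁, ..., λ_K be positive reals with λ_i > λ₁ for all i = 2, ..., K. Define, for Ψ > 0, C(Ψ) = ∫_{(0,∞)^{K-1}} exp(−Ψ / ∏_{i=2}^K η_i) · ∏_{i=2}^K η_i^{λ_i − λ₁ − 1} · exp(−∑_{i=2}^K η_i) dη₂ ⋯ dη_K. Then C(Ψ) tends to ∏_{i=2}^K Γ(λ_i − λ₁) as Ψ → 0⁺. (This is the key limit in Theorem 1(i): the density of the product of K independent Gamma(λ_i, 1) random variables equals ∏_{i=1}^K Γ(λ_i)^{−1} · Ψ^{λ₁ − 1} · C(Ψ), so its sparsity shape parameter is min_i λ_i.) -/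
open MeasureTheory Real Filter Set Topology

/-!
`C(Ψ)` is the integral of `exp (-(Ψ / ∏ η i))` against the product of the gamma kernels
`η i ^ (s i - 1) * exp (-η i)` over the positive orthant, with `s i = l i - l1 > 0`. The factor
`exp (-(Ψ / ∏ η i))` lies in `(0, 1]` and tends to `1` pointwise as `Ψ → 0⁺`, so dominated
convergence gives the limit `∫ ∏ i, η i ^ (s i - 1) * exp (-η i)`, which by Fubini is
`∏ i, Γ (s i)`.
-/

theorem tendsto_integral_exp_neg_div_mul {α : Type*} [MeasurableSpace α] {μ : Measure α}
    {p g : α → ℝ} (hp : AEMeasurable p μ) (hp_nonneg : ∀ᵐ x ∂μ, 0 ≤ p x) (hg : Integrable g μ) :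
    Tendsto (fun Ψ : ℝ => ∫ x, exp (-(Ψ / p x)) * g x ∂μ) (𝓝[>] 0) (𝓝 (∫ x, g x ∂μ)) := by
  refine tendsto_integral_filter_of_dominated_convergence (fun x => ‖g x‖) ?_ ?_ hg.norm ?_
  · exact .of_forall fun Ψ =>
      ((hp.const_div Ψ).neg.exp.aestronglyMeasurable).mul hg.aestronglyMeasurable
  · filter_upwards [self_mem_nhdsWithin] with Ψ (hΨ : 0 < Ψ)
    filter_upwards [hp_nonneg] with x hx
    rw [norm_mul, Real.norm_eq_abs, abs_exp]
    refine mul_le_of_le_one_left (norm_nonneg _) (exp_le_one_iff.2 ?_)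
    exact neg_nonpos.2 (div_nonneg hΨ.le hx)
  · refine .of_forall fun x => ?_
    have hcont : Continuous fun Ψ : ℝ => exp (-(Ψ / p x)) * g x := by fun_prop
    simpa using (hcont.tendsto 0).mono_left nhdsWithin_le_nhds

section GammaKernel

variable {ι : Type*} [Fintype ι]

theorem volume_restrict_univ_pi (s : ι → Set ℝ) :
    (volume : Measure (ι → ℝ)).restrict (univ.pi s) = Measure.pi fun i => volume.restrict (s i) := by
  rw [volume_pi, Measure.restrict_pi_pi]

theorem prod_exp_neg_mul_rpow (s η : ι → ℝ) :
    ∏ i, exp (-η i) * η i ^ (s i - 1) = (∏ i, η i ^ (s i - 1)) * exp (-(∑ i, η i)) := by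
  rw [Finset.prod_mul_distrib, ← exp_sum, Finset.sum_neg_distrib, mul_comm]

variable {s : ι → ℝ}

theorem integrableOn_prod_rpow_mul_exp_neg_sum (hs : ∀ i, 0 < s i) :
    IntegrableOn (fun η : ι → ℝ => (∏ i, η i ^ (s i - 1)) * exp (-(∑ i, η i)))
      (univ.pi fun _ => Ioi 0) := by
  simp_rw [IntegrableOn, volume_restrict_univ_pi, ← prod_exp_neg_mul_rpow]
  exact .fintype_prod fun i => GammaIntegral_convergent (hs i)

theorem integral_prod_rpow_mul_exp_neg_sum (hs : ∀ i, 0 < s i) :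
    ∫ η in univ.pi fun _ => Ioi 0, (∏ i, η i ^ (s i - 1)) * exp (-(∑ i, η i)) =
      ∏ i, Gamma (s i) := by
  simp_rw [volume_restrict_univ_pi, ← prod_exp_neg_mul_rpow]
  rw [integral_fintype_prod_eq_prod fun i x => exp (-x) * x ^ (s i - 1)]
  exact Finset.prod_congr rfl fun i _ => (Gamma_eq_integral (hs i)).symm

end GammaKernel

theorem stmt0_general (n : ℕ) (l1 : ℝ)
    (l : Fin n → ℝ) (hl : ∀ i, l1 < l i) :
    Tendsto (fun Ψ : ℝ =>
      ∫ η : Fin n → ℝ in Set.univ.pi fun _ => Set.Ioi (0 : ℝ),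
        Real.exp (-(Ψ / ∏ i, η i)) *
          ((∏ i, η i ^ (l i - l1 - 1)) * Real.exp (-(∑ i, η i))))
      (nhdsWithin 0 (Set.Ioi 0))
      (nhds (∏ i, Real.Gamma (l i - l1))) := by
  have hs : ∀ i, 0 < l i - l1 := fun i => sub_pos.2 (hl i)
  rw [← integral_prod_rpow_mul_exp_neg_sum hs]
  refine tendsto_integral_exp_neg_div_mul (by fun_prop) ?_
    (integrableOn_prod_rpow_mul_exp_neg_sum hs)
  filter_upwards [ae_restrict_mem (MeasurableSet.univ_pi fun _ => measurableSet_Ioi)] with η hη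
  exact Finset.prod_nonneg fun i _ => (hη i (mem_univ i)).le

/-- Key limit in Theorem 1(i) (Griffin & Brown): with `n = K - 1 ≥ 1` additional gamma
factors with shapes `l i > l1`, the function
`C(Ψ) = ∫_{(0,∞)^n} exp(-Ψ/∏ η_i) ∏ η_i^{l_i - l1 - 1} exp(-∑ η_i) dη`
tends to `∏ Γ(l_i - l1)` as `Ψ → 0⁺`. -/
theorem stmt0 (n : ℕ) (hn : 1 ≤ n) (l1 : ℝ) (hl1 : 0 < l1)
    (l : Fin n → ℝ) (hlpos : ∀ i, 0 < l i) (hl : ∀ i, l1 < l i) :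
    Tendsto (fun Ψ : ℝ =>
      ∫ η : Fin n → ℝ in Set.univ.pi fun _ => Set.Ioi (0 : ℝ),
        Real.exp (-(Ψ / ∏ i, η i)) *
          ((∏ i, η i ^ (l i - l1 - 1)) * Real.exp (-(∑ i, η i))))
      (nhdsWithin 0 (Set.Ioi 0))
      (nhds (∏ i, Real.Gamma (l i - l1))) :=
  stmt0_general n l1 l hl
end

section
/- Let a, b > 0 and let X and Y be independent random variables with X ∼ Gamma(a, 1) and Y ∼ Gamma(b, 1). Then the distribution of the product X·Y is absolutely continuous with density g(Ψ) = (1/(Γ(a)Γ(b))) · Ψ^{a−1} · ∫₀^∞ η^{b−a−1} exp(−η − Ψ/η) dη for Ψ > 0; equivalently, for every x > 0, P(X·Y ≤ x) = ∫₀^x (1/(Γ(a)Γ(b))) Ψ^{a−1} (∫₀^∞ η^{b−a−1} e^{−η − Ψ/η} dη) dΨ. -/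
open MeasureTheory Real Set ProbabilityTheory

open scoped ENNReal

/-!
By independence, `P(XY ≤ x)` is the mass that the product of the two Gamma laws gives to
`{uη ≤ x}`. Disintegrating along `η` and substituting `u = Ψ/η` in the inner integral writes
this as `∫_{Ψ ≤ x} ∫_{η > 0} f_b(η) η⁻¹ f_a(Ψ/η) dη dΨ` (Tonelli), where `f_a, f_b` are the Gamma
densities, and this integrand factors as `Ψ^{a-1} η^{b-a-1} e^{-η-Ψ/η} / (Γ(a)Γ(b))`. Passing
from these `ℝ≥0∞`-valued integrals to real ones is harmless: the total mass is finite, so the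
inner integral is finite for almost every `Ψ`.
-/

theorem setLIntegral_Iic_zero_eq_zero {F : ℝ → ℝ≥0∞} (hF : ∀ t < 0, F t = 0) :
    ∫⁻ t in Iic 0, F t = 0 := by
  rw [← setLIntegral_congr Iio_ae_eq_Iic, setLIntegral_congr_fun measurableSet_Iio hF,
    lintegral_zero]

theorem withDensity_setOf_mul_le (f : ℝ → ℝ≥0∞) {η : ℝ} (hη : 0 < η) (x : ℝ) :
    volume.withDensity f {u | u * η ≤ x} = ∫⁻ Ψ in Iic x, ENNReal.ofReal η⁻¹ * f (Ψ * η⁻¹) := by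
  have hη' : η⁻¹ ≠ 0 := inv_ne_zero hη.ne'
  have hpre : MeasurableEquiv.mulRight₀ η⁻¹ hη' ⁻¹' {u : ℝ | u * η ≤ x} = Iic x := by
    ext Ψ; simp [hη.ne']
  conv_lhs => rw [withDensity_apply' f, ← Real.smul_map_volume_mul_right hη']
  rw [Measure.restrict_smul, lintegral_smul_measure, ← MeasurableEquiv.coe_mulRight₀ hη',
    MeasurableEquiv.restrict_map, lintegral_map_equiv, hpre,
    lintegral_const_mul' _ _ ENNReal.ofReal_ne_top, abs_of_pos (inv_pos.mpr hη), smul_eq_mul]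
  rfl

theorem prod_withDensity_setOf_mul_le {f g : ℝ → ℝ≥0∞} (hf : Measurable f) (hg : Measurable g)
    (hg_neg : ∀ η < 0, g η = 0) (x : ℝ) :
    (volume.withDensity f).prod (volume.withDensity g) {p : ℝ × ℝ | p.1 * p.2 ≤ x} =
      ∫⁻ Ψ in Iic x, ∫⁻ η in Ioi 0, g η * (ENNReal.ofReal η⁻¹ * f (Ψ * η⁻¹)) := by
  have hS : MeasurableSet {p : ℝ × ℝ | p.1 * p.2 ≤ x} :=
    measurableSet_le (measurable_fst.mul measurable_snd) measurable_const
  have hF : Measurable (Function.uncurry fun η Ψ => g η * (ENNReal.ofReal η⁻¹ * f (Ψ * η⁻¹))) :=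
    (hg.comp measurable_fst).mul ((ENNReal.measurable_ofReal.comp measurable_fst.inv).mul
      (hf.comp (measurable_snd.mul measurable_fst.inv)))
  calc _ = ∫⁻ η, g η * volume.withDensity f {u | u * η ≤ x} := by
        rw [Measure.prod_apply_symm hS, lintegral_withDensity_eq_lintegral_mul _ hg
          (measurable_measure_prodMk_right hS)]
        rfl
    _ = ∫⁻ η in Ioi 0, g η * volume.withDensity f {u | u * η ≤ x} := by
        rw [← lintegral_add_compl _ measurableSet_Ioi, compl_Ioi, setLIntegral_Iic_zero_eq_zero
          fun η hη => by rw [hg_neg η hη, zero_mul], add_zero]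
    _ = ∫⁻ η in Ioi 0, ∫⁻ Ψ in Iic x, g η * (ENNReal.ofReal η⁻¹ * f (Ψ * η⁻¹)) := by
        refine setLIntegral_congr_fun measurableSet_Ioi fun η hη => ?_
        rw [withDensity_setOf_mul_le f hη]
        exact (lintegral_const_mul _ (measurable_const.mul (hf.comp (measurable_mul_const _)))).symm
    _ = _ := lintegral_lintegral_swap hF.aemeasurable

theorem toReal_ofReal_mul_setLIntegral_ofReal {α : Type*} [MeasurableSpace α] {ν : Measure α}
    {s : Set α} {c : ℝ} {h : α → ℝ} (hc : 0 ≤ c) (hs : MeasurableSet s) (hh : Measurable h)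
    (hh_nonneg : ∀ t ∈ s, 0 ≤ h t) :
    (ENNReal.ofReal c * ∫⁻ t in s, ENNReal.ofReal (h t) ∂ν).toReal = c * ∫ t in s, h t ∂ν := by
  rw [ENNReal.toReal_mul, ENNReal.toReal_ofReal hc, integral_eq_lintegral_of_nonneg_ae
    ((ae_restrict_iff' hs).mpr (ae_of_all _ hh_nonneg)) hh.aestronglyMeasurable]

theorem gammaPDF_mul_inv_mul_gammaPDF {a b Ψ η : ℝ} (ha : 0 < a) (hb : 0 < b) (hΨ : 0 ≤ Ψ)
    (hη : 0 < η) :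
    gammaPDF b 1 η * (ENNReal.ofReal η⁻¹ * gammaPDF a 1 (Ψ * η⁻¹)) =
      ENNReal.ofReal (1 / (Gamma a * Gamma b) * Ψ ^ (a - 1)) *
        ENNReal.ofReal (η ^ (b - a - 1) * exp (-η - Ψ / η)) := by
  have := Gamma_pos_of_pos ha
  have := Gamma_pos_of_pos hb
  rw [gammaPDF_of_nonneg hη.le, gammaPDF_of_nonneg (by positivity),
    ← ENNReal.ofReal_mul (by positivity), ← ENNReal.ofReal_mul (by positivity),
    ← ENNReal.ofReal_mul (by positivity)]
  congr 1
  have hpow : η ^ (b - a - 1) = η ^ (b - 1) * η⁻¹ * η ^ (-(a - 1)) := by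
    rw [← rpow_neg_one, ← rpow_add hη, ← rpow_add hη]
    ring_nf
  have hexp : exp (-η - Ψ / η) = exp (-(1 * η)) * exp (-(1 * (Ψ * η⁻¹))) := by
    rw [← exp_add]
    ring_nf
  rw [mul_rpow hΨ (inv_nonneg.mpr hη.le), inv_rpow hη.le, ← rpow_neg hη.le, hpow, hexp,
    one_rpow, one_rpow]
  ring

theorem gammaMeasure_prod_setOf_mul_le {a b : ℝ} (ha : 0 < a) (hb : 0 < b) {x : ℝ} (hx : 0 ≤ x) :
    (gammaMeasure a 1).prod (gammaMeasure b 1) {p : ℝ × ℝ | p.1 * p.2 ≤ x} =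
      ∫⁻ Ψ in Ioc 0 x, ENNReal.ofReal (1 / (Gamma a * Gamma b) * Ψ ^ (a - 1)) *
        ∫⁻ η in Ioi 0, ENNReal.ofReal (η ^ (b - a - 1) * exp (-η - Ψ / η)) := by
  have hpdf (c : ℝ) : Measurable (gammaPDF c 1) :=
    ENNReal.measurable_ofReal.comp (measurable_gammaPDFReal c 1)
  have h_neg : ∀ Ψ < 0,
      ∫⁻ η in Ioi 0, gammaPDF b 1 η * (ENNReal.ofReal η⁻¹ * gammaPDF a 1 (Ψ * η⁻¹)) = 0 := by
    intro Ψ hΨ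
    refine (setLIntegral_congr_fun measurableSet_Ioi fun η (hη : 0 < η) => ?_).trans
      lintegral_zero
    rw [gammaPDF_of_neg (mul_neg_of_neg_of_pos hΨ (inv_pos.mpr hη)), mul_zero, mul_zero]
  rw [gammaMeasure, gammaMeasure, prod_withDensity_setOf_mul_le (hpdf a) (hpdf b)
    (fun _ => gammaPDF_of_neg) x, ← Iic_union_Ioc_eq_Iic hx,
    lintegral_union measurableSet_Ioc (Iic_disjoint_Ioc le_rfl),
    setLIntegral_Iic_zero_eq_zero h_neg, zero_add]
  refine setLIntegral_congr_fun measurableSet_Ioc fun Ψ hΨ => ?_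
  rw [setLIntegral_congr_fun measurableSet_Ioi fun η hη =>
      gammaPDF_mul_inv_mul_gammaPDF ha hb hΨ.1.le hη,
    lintegral_const_mul' _ _ ENNReal.ofReal_ne_top]

/-- The product of independent `Gamma(a,1)` and `Gamma(b,1)` random variables has the
density `g(Ψ) = (Γ(a)Γ(b))⁻¹ Ψ^{a-1} ∫₀^∞ η^{b-a-1} e^{-η - Ψ/η} dη` on `(0,∞)`:
for every `x > 0`, `P(X·Y ≤ x) = ∫₀^x g(Ψ) dΨ`. -/
theorem stmt1 {Ω : Type*} [MeasurableSpace Ω] (μ : Measure Ω) [IsProbabilityMeasure μ]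
    (a b : ℝ) (ha : 0 < a) (hb : 0 < b)
    (X Y : Ω → ℝ) (hX : Measurable X) (hY : Measurable Y)
    (hXlaw : μ.map X = gammaMeasure a 1)
    (hYlaw : μ.map Y = gammaMeasure b 1)
    (hindep : IndepFun X Y μ) :
    ∀ x : ℝ, 0 < x →
      (μ {ω | X ω * Y ω ≤ x}).toReal =
        ∫ Ψ in (0:ℝ)..x, (1 / (Real.Gamma a * Real.Gamma b)) * Ψ ^ (a - 1) *
          ∫ η in Set.Ioi (0:ℝ), η ^ (b - a - 1) * Real.exp (-η - Ψ / η) := by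
  intro x hx
  have hkernel : Measurable fun p : ℝ × ℝ => p.2 ^ (b - a - 1) * exp (-p.2 - p.1 / p.2) := by
    fun_prop
  have hlaw : μ {ω | X ω * Y ω ≤ x} =
      (gammaMeasure a 1).prod (gammaMeasure b 1) {p : ℝ × ℝ | p.1 * p.2 ≤ x} := by
    have hS : MeasurableSet {p : ℝ × ℝ | p.1 * p.2 ≤ x} :=
      measurableSet_le (by fun_prop) (by fun_prop)
    rw [← hXlaw, ← hYlaw, ← (indepFun_iff_map_prod_eq_prod_map_map hX.aemeasurable
      hY.aemeasurable).mp hindep, Measure.map_apply (hX.prodMk hY) hS]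
    rfl
  have hF : Measurable fun Ψ => ENNReal.ofReal (1 / (Gamma a * Gamma b) * Ψ ^ (a - 1)) *
      ∫⁻ η in Ioi 0, ENNReal.ofReal (η ^ (b - a - 1) * exp (-η - Ψ / η)) :=
    (by fun_prop : Measurable _).mul (ENNReal.measurable_ofReal.comp hkernel).lintegral_prod_right'
  have hfin := measure_ne_top μ {ω | X ω * Y ω ≤ x}
  rw [hlaw, gammaMeasure_prod_setOf_mul_le ha hb hx.le] at hfin ⊢
  rw [← integral_toReal hF.aemeasurable (ae_lt_top hF hfin),
    intervalIntegral.integral_of_le hx.le]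
  refine setIntegral_congr_fun measurableSet_Ioc fun Ψ hΨ => ?_
  have := Gamma_pos_of_pos ha
  have := Gamma_pos_of_pos hb
  exact toReal_ofReal_mul_setLIntegral_ofReal (by have := hΨ.1; positivity) measurableSet_Ioi
    (hkernel.comp measurable_prodMk_left) fun η (hη : 0 < η) => by positivity
end

section
/- Let K ≥ 2, let λ₁, ..., λ_K and c₁, ..., c_K be positive reals with λ_i > λ₁ for all i = 2, ..., K. Define, for Ψ > 0, C(Ψ) = ∫_{(0,∞)^{K-1}} (1 + Ψ / ∏_{i=2}^K η_i)^{−(λ₁+c₁)} · ∏_{i=2}^K η_i^{λ_i − λ₁ − 1} (1 + η_i)^{−(λ_i + c_i)} dη₂ ⋯ dη_K. Then C(Ψ) tends to ∏_{i=2}^K Γ(λ_i − λ₁)Γ(λ₁ + c_i)/Γ(λ_i + c_i) as Ψ → 0⁺. (This is the key limit in Theorem 2(i): the density of the product of K independent GG(λ_i, c_i, 1) random variables is proportional to Ψ^{λ₁−1} C(Ψ), so its sparsity shape parameter is min_i λ_i.) -/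
/-!
For `Ψ > 0` the factor `(1 + Ψ / ∏ ηᵢ) ^ (-(λ₁ + c₁))` lies in `(0, 1]` and tends to `1` as
`Ψ → 0⁺`, so by dominated convergence `C(Ψ)` tends to the integral of the product
`∏ ηᵢ ^ (λᵢ - λ₁ - 1) (1 + ηᵢ) ^ (-(λᵢ + cᵢ))`. That integral factorises into beta-prime integrals
`∫₀^∞ x ^ (a - 1) (1 + x) ^ (-(a + b)) dx = Γ(a) Γ(b) / Γ(a + b)` with `a = λᵢ - λ₁`,
`b = λ₁ + cᵢ`, which the substitution `x = t / (1 - t)` turns into Euler's beta integral.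
-/

open MeasureTheory Real Filter Set Topology

section Beta

variable {a b : ℝ}

lemma ofReal_betaIntegrand {x : ℝ} (hx : x ∈ Ioo (0 : ℝ) 1) :
    (x : ℂ) ^ ((a : ℂ) - 1) * (1 - (x : ℂ)) ^ ((b : ℂ) - 1)
      = ((x ^ (a - 1) * (1 - x) ^ (b - 1) : ℝ) : ℂ) := by
  have h1x : (0 : ℝ) ≤ 1 - x := by linarith [hx.2]
  push_cast [Complex.ofReal_cpow hx.1.le, Complex.ofReal_cpow h1x]
  rfl

lemma integrableOn_rpow_mul_one_sub_rpow (ha : 0 < a) (hb : 0 < b) :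
    IntegrableOn (fun t : ℝ => t ^ (a - 1) * (1 - t) ^ (b - 1)) (Ioo 0 1) := by
  have hC : IntegrableOn
      (fun t : ℝ => (t : ℂ) ^ ((a : ℂ) - 1) * (1 - (t : ℂ)) ^ ((b : ℂ) - 1)) (Ioo 0 1) :=
    (Complex.betaIntegral_convergent (by simpa using ha) (by simpa using hb)).1.mono_set
      Ioo_subset_Ioc_self
  have hR := (hC.congr_fun (fun t ht => ofReal_betaIntegrand ht) measurableSet_Ioo).re
  simpa [IntegrableOn] using hR

lemma integral_rpow_mul_one_sub_rpow (ha : 0 < a) (hb : 0 < b) :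
    ∫ t in Ioo (0 : ℝ) 1, t ^ (a - 1) * (1 - t) ^ (b - 1)
      = Gamma a * Gamma b / Gamma (a + b) := by
  have hβ : Complex.betaIntegral a b
      = ((∫ t in Ioo (0 : ℝ) 1, t ^ (a - 1) * (1 - t) ^ (b - 1) : ℝ) : ℂ) := by
    rw [Complex.betaIntegral, intervalIntegral.integral_of_le zero_le_one,
      ← Measure.restrict_congr_set Ioo_ae_eq_Ioc,
      setIntegral_congr_fun measurableSet_Ioo fun t ht => ofReal_betaIntegrand ht]
    exact integral_ofReal
  have hΓ := Complex.betaIntegral_eq_Gamma_mul_div (a : ℂ) b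
    (by simpa using ha) (by simpa using hb)
  rw [hβ, ← Complex.ofReal_add, Complex.Gamma_ofReal, Complex.Gamma_ofReal,
    Complex.Gamma_ofReal] at hΓ
  exact_mod_cast hΓ

end Beta

section BetaPrime

lemma hasDerivAt_div_one_sub {t : ℝ} (ht : t ≠ 1) :
    HasDerivAt (fun t : ℝ => t / (1 - t)) ((1 - t) ^ 2)⁻¹ t := by
  have h := (hasDerivAt_id' t).div ((hasDerivAt_id' t).const_sub 1) (sub_ne_zero.2 ht.symm)
  rwa [show 1 * (1 - t) - t * -1 = 1 by ring, one_div] at h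

lemma injOn_div_one_sub : InjOn (fun t : ℝ => t / (1 - t)) (Ioo 0 1) := by
  intro x hx y hy h
  have hx1 : 1 - x ≠ 0 := by linarith [hx.2]
  have hy1 : 1 - y ≠ 0 := by linarith [hy.2]
  field_simp at h
  linarith

lemma image_div_one_sub_Ioo : (fun t : ℝ => t / (1 - t)) '' Ioo 0 1 = Ioi 0 := by
  refine Subset.antisymm ?_ fun y (hy : 0 < y) => ?_
  · rintro _ ⟨t, ht, rfl⟩
    exact div_pos ht.1 (by linarith [ht.2])
  · refine ⟨y / (1 + y), ⟨by positivity, (div_lt_one (by positivity)).2 (by linarith)⟩, ?_⟩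
    field_simp
    ring

variable {a b : ℝ}

lemma abs_deriv_mul_betaPrimeIntegrand {t : ℝ} (ht : t ∈ Ioo (0 : ℝ) 1) :
    |((1 - t) ^ 2)⁻¹| * ((t / (1 - t)) ^ (a - 1) * (1 + t / (1 - t)) ^ (-(a + b)))
      = t ^ (a - 1) * (1 - t) ^ (b - 1) := by
  have hu : 0 < 1 - t := by linarith [ht.2]
  have h1 : 1 + t / (1 - t) = (1 - t)⁻¹ := by field_simp; ring
  have hexp : (1 - t) ^ (b - 1) * ((1 - t) ^ 2 * (1 - t) ^ (a - 1)) = (1 - t) ^ (a + b) := by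
    rw [← rpow_natCast, ← rpow_add hu, ← rpow_add hu]
    congr 1
    push_cast
    ring
  rw [abs_of_pos (by positivity), h1, div_rpow ht.1.le hu.le, inv_rpow hu.le, rpow_neg hu.le,
    inv_inv, ← hexp]
  field_simp

lemma integrableOn_rpow_mul_one_add_rpow_neg (ha : 0 < a) (hb : 0 < b) :
    IntegrableOn (fun x : ℝ => x ^ (a - 1) * (1 + x) ^ (-(a + b))) (Ioi 0) := by
  rw [← image_div_one_sub_Ioo, integrableOn_image_iff_integrableOn_abs_deriv_smul
    measurableSet_Ioo (fun t ht => (hasDerivAt_div_one_sub ht.2.ne).hasDerivWithinAt)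
    injOn_div_one_sub]
  exact (integrableOn_rpow_mul_one_sub_rpow ha hb).congr_fun
    (fun t ht => (abs_deriv_mul_betaPrimeIntegrand ht).symm) measurableSet_Ioo

lemma integral_rpow_mul_one_add_rpow_neg (ha : 0 < a) (hb : 0 < b) :
    ∫ x in Ioi (0 : ℝ), x ^ (a - 1) * (1 + x) ^ (-(a + b))
      = Gamma a * Gamma b / Gamma (a + b) := by
  rw [← image_div_one_sub_Ioo, integral_image_eq_integral_abs_deriv_smul measurableSet_Ioo
    (fun t ht => (hasDerivAt_div_one_sub ht.2.ne).hasDerivWithinAt) injOn_div_one_sub,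
    ← integral_rpow_mul_one_sub_rpow ha hb]
  exact setIntegral_congr_fun measurableSet_Ioo fun t ht => abs_deriv_mul_betaPrimeIntegrand ht

end BetaPrime

section PiProduct

variable {ι 𝕜 : Type*} [Fintype ι] [RCLike 𝕜] {E : ι → Type*}
  {mE : ∀ i, MeasurableSpace (E i)} {μ : (i : ι) → Measure (E i)} [∀ i, SigmaFinite (μ i)]
  {f : (i : ι) → E i → 𝕜}

lemma integrableOn_univ_pi_prod {s : (i : ι) → Set (E i)}
    (hf : ∀ i, IntegrableOn (f i) (s i) (μ i)) :
    IntegrableOn (fun x => ∏ i, f i (x i)) (univ.pi s) (Measure.pi μ) := by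
  rw [IntegrableOn, Measure.restrict_pi_pi]
  exact Integrable.fintype_prod_dep hf

lemma setIntegral_univ_pi_prod (s : (i : ι) → Set (E i)) :
    ∫ x in univ.pi s, ∏ i, f i (x i) ∂Measure.pi μ = ∏ i, ∫ x in s i, f i x ∂μ i := by
  rw [Measure.restrict_pi_pi, integral_fintype_prod_eq_prod]

end PiProduct

lemma tendsto_setIntegral_one_add_div_rpow_mul {α : Type*} [MeasurableSpace α] {μ : Measure α}
    {S : Set α} {f h : α → ℝ} {s : ℝ} (hS : MeasurableSet S) (hf : IntegrableOn f S μ)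
    (hh : Measurable h) (hh_nonneg : ∀ x ∈ S, 0 ≤ h x) (hs : 0 ≤ s) :
    Tendsto (fun Ψ : ℝ => ∫ x in S, (1 + Ψ / h x) ^ (-s) * f x ∂μ) (𝓝[>] 0)
      (𝓝 (∫ x in S, f x ∂μ)) := by
  have hmeas (Ψ : ℝ) : Measurable fun x => (1 + Ψ / h x) ^ (-s) := by fun_prop
  refine tendsto_integral_filter_of_dominated_convergence (fun x => ‖f x‖)
    (Eventually.of_forall fun Ψ => (hmeas Ψ).aestronglyMeasurable.mul hf.aestronglyMeasurable)
    ?_ hf.norm ?_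
  · filter_upwards [self_mem_nhdsWithin] with Ψ (hΨ : 0 < Ψ)
    filter_upwards [ae_restrict_mem hS] with x hx
    have hbase : 1 ≤ 1 + Ψ / h x := le_add_of_nonneg_right (div_nonneg hΨ.le (hh_nonneg x hx))
    rw [norm_mul, norm_of_nonneg (rpow_nonneg (zero_le_one.trans hbase) _)]
    exact mul_le_of_le_one_left (norm_nonneg _)
      (rpow_le_one_of_one_le_of_nonpos hbase (neg_nonpos.2 hs))
  · refine Eventually.of_forall fun x => ?_
    have hlim : Tendsto (fun Ψ : ℝ => (1 + Ψ / h x) ^ (-s)) (𝓝 0) (𝓝 1) := by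
      have := ((continuousAt_id (x := (0 : ℝ))).div_const (h x)).const_add 1 |>.rpow_const
        (p := -s) (Or.inl (by simp))
      simpa using this.tendsto
    simpa using (hlim.mono_left nhdsWithin_le_nhds).mul_const (f x)

theorem stmt3_general (n : ℕ) (l1 c1 : ℝ) (hl1 : 0 < l1) (hc1 : 0 < c1)
    (l c : Fin n → ℝ) (hcpos : ∀ i, 0 < c i)
    (hl : ∀ i, l1 < l i) :
    Tendsto (fun Ψ : ℝ =>
      ∫ η : Fin n → ℝ in Set.univ.pi fun _ => Set.Ioi (0 : ℝ),
        (1 + Ψ / ∏ i, η i) ^ (-(l1 + c1)) *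
          ∏ i, η i ^ (l i - l1 - 1) * (1 + η i) ^ (-(l i + c i)))
      (nhdsWithin 0 (Set.Ioi 0))
      (nhds (∏ i, Real.Gamma (l i - l1) * Real.Gamma (l1 + c i) /
        Real.Gamma (l i + c i))) := by
  set g : Fin n → ℝ → ℝ := fun i x => x ^ (l i - l1 - 1) * (1 + x) ^ (-(l i + c i))
  have hg (i : Fin n) : IntegrableOn (g i) (Ioi 0) ∧
      ∫ x in Ioi 0, g i x = Gamma (l i - l1) * Gamma (l1 + c i) / Gamma (l i + c i) := by
    have ha : 0 < l i - l1 := sub_pos.2 (hl i)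
    have hb : 0 < l1 + c i := add_pos hl1 (hcpos i)
    simp only [g, show l i + c i = (l i - l1) + (l1 + c i) by ring]
    exact ⟨integrableOn_rpow_mul_one_add_rpow_neg ha hb,
      integral_rpow_mul_one_add_rpow_neg ha hb⟩
  have hlim : ∫ η : Fin n → ℝ in univ.pi fun _ => Ioi 0, ∏ i, g i (η i)
      = ∏ i, Gamma (l i - l1) * Gamma (l1 + c i) / Gamma (l i + c i) := by
    rw [volume_pi, setIntegral_univ_pi_prod (f := g)]
    exact Finset.prod_congr rfl fun i _ => (hg i).2
  rw [← hlim]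
  exact tendsto_setIntegral_one_add_div_rpow_mul
    (MeasurableSet.univ_pi fun _ => measurableSet_Ioi)
    (integrableOn_univ_pi_prod (μ := fun _ => volume) fun i => (hg i).1) (by fun_prop)
    (fun η hη => Finset.prod_nonneg fun i _ => (hη i trivial).le) (add_pos hl1 hc1).le

/-- Key limit in Theorem 2(i) (Griffin & Brown): with `n = K - 1 ≥ 1` additional
gamma-gamma factors with shapes `l i > l1` and tail parameters `c i`, the function
`C(Ψ) = ∫_{(0,∞)^n} (1 + Ψ/∏ η_i)^{-(l1+c1)} ∏ η_i^{l_i - l1 - 1} (1 + η_i)^{-(l_i + c_i)} dη`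
tends to `∏ Γ(l_i - l1) Γ(l1 + c_i) / Γ(l_i + c_i)` as `Ψ → 0⁺`. -/
theorem stmt3 (n : ℕ) (hn : 1 ≤ n) (l1 c1 : ℝ) (hl1 : 0 < l1) (hc1 : 0 < c1)
    (l c : Fin n → ℝ) (hlpos : ∀ i, 0 < l i) (hcpos : ∀ i, 0 < c i)
    (hl : ∀ i, l1 < l i) :
    Tendsto (fun Ψ : ℝ =>
      ∫ η : Fin n → ℝ in Set.univ.pi fun _ => Set.Ioi (0 : ℝ),
        (1 + Ψ / ∏ i, η i) ^ (-(l1 + c1)) *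
          ∏ i, η i ^ (l i - l1 - 1) * (1 + η i) ^ (-(l i + c i)))
      (nhdsWithin 0 (Set.Ioi 0))
      (nhds (∏ i, Real.Gamma (l i - l1) * Real.Gamma (l1 + c i) /
        Real.Gamma (l i + c i))) :=
  stmt3_general n l1 c1 hl1 hc1 l c hcpos hl
end

section
/- Let λ, d > 0 and c > 1, and let g be the GG(λ, c, d) density. Then the marginal second moment of the normal-gamma-gamma scale mixture equals λ d / (c − 1); that is, ∫₀^∞ ∫_ℝ β² · (2πΨ)^{−1/2} exp(−β²/(2Ψ)) · g(Ψ) dβ dΨ = λ d / (c − 1). In particular the prior variance of a normal-gamma-gamma distributed coefficient β (with β | Ψ ∼ N(0, Ψ) and Ψ ∼ GG(λ, c, d)) is λ d / (c − 1) when c > 1. -/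
/-!
Given `Ψ`, the inner integral is the variance `Ψ` of `N(0, Ψ)`, so the double integral is
the mean of `GG(λ, c, d)`. The substitution `Ψ = d x` turns that mean into a beta integral
of the second kind, `∫₀^∞ x^λ (1 + x)^(-(λ + c)) dx = B(λ + 1, c - 1)`, which converges
because `c > 1`; then `Γ(λ + 1) = λ Γ(λ)` and `Γ(c) = (c - 1) Γ(c - 1)` leave
`λ d / (c - 1)`.
-/

open MeasureTheory Real Filter Set

noncomputable def ggPDF (l c d Ψ : ℝ) : ℝ :=
  (1 / d) ^ l * (Real.Gamma (l + c) / (Real.Gamma l * Real.Gamma c)) *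
    Ψ ^ (l - 1) * (1 + Ψ / d) ^ (-(l + c))

open ProbabilityTheory in
lemma integral_sq_mul_gaussian {v : ℝ} (hv : 0 < v) :
    ∫ x : ℝ, x ^ 2 * ((2 * π * v) ^ (-(1:ℝ)/2) * Real.exp (-(x ^ 2 / (2 * v)))) = v := by
  have hvar := variance_fun_id_gaussianReal (μ := 0) (v := v.toNNReal)
  rw [variance_eq_integral measurable_id'.aemeasurable, integral_id_gaussianReal,
    integral_gaussianReal_eq_integral_smul (by simpa using hv)] at hvar
  convert hvar using 3 with x
  · rw [gaussianPDFReal_def, Real.coe_toNNReal _ hv.le, smul_eq_mul, sqrt_eq_rpow,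
      ← rpow_neg (by positivity)]
    ring_nf
  · exact (Real.coe_toNNReal _ hv.le).symm

lemma integral_rpow_mul_one_sub_rpow_Ioo {a b : ℝ} (ha : 0 < a) (hb : 0 < b) :
    ∫ t in Ioo (0:ℝ) 1, t ^ (a - 1) * (1 - t) ^ (b - 1)
      = Gamma a * Gamma b / Gamma (a + b) := by
  have hGamma := Complex.Gamma_mul_Gamma_eq_betaIntegral (s := a) (t := b)
    (by simpa using ha) (by simpa using hb)
  have hbeta : Complex.betaIntegral a b
      = ((∫ t in (0:ℝ)..1, t ^ (a - 1) * (1 - t) ^ (b - 1) : ℝ) : ℂ) := by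
    rw [Complex.betaIntegral, ← intervalIntegral.integral_ofReal]
    refine intervalIntegral.integral_congr fun t ht => ?_
    rw [uIcc_of_le zero_le_one] at ht
    push_cast
    rw [Complex.ofReal_cpow ht.1, Complex.ofReal_cpow (by linarith [ht.2])]
    push_cast
    ring
  rw [hbeta, ← Complex.ofReal_add, Complex.Gamma_ofReal, Complex.Gamma_ofReal,
    Complex.Gamma_ofReal, ← Complex.ofReal_mul, ← Complex.ofReal_mul, Complex.ofReal_inj,
    intervalIntegral.integral_of_le zero_le_one, integral_Ioc_eq_integral_Ioo] at hGamma
  rw [hGamma, mul_div_cancel_left₀ _ (Gamma_pos_of_pos (add_pos ha hb)).ne']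

/-- The beta integral of the second kind, reduced to the first kind by `x = t / (1 - t)`. -/
lemma integral_rpow_mul_one_add_rpow_Ioi {a b : ℝ} (ha : 0 < a) (hb : 0 < b) :
    ∫ x in Ioi (0:ℝ), x ^ (a - 1) * (1 + x) ^ (-(a + b))
      = Gamma a * Gamma b / Gamma (a + b) := by
  have himage : (fun t : ℝ => t / (1 - t)) '' Ioo 0 1 = Ioi 0 := by
    ext x
    constructor
    · rintro ⟨t, ⟨ht0, ht1⟩, rfl⟩
      exact div_pos ht0 (by linarith)
    · intro (hx : 0 < x)
      refine ⟨x / (1 + x), ⟨by positivity, (div_lt_one (by linarith)).2 (by linarith)⟩, ?_⟩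
      field_simp
      ring
  have hderiv : ∀ t ∈ Ioo (0:ℝ) 1,
      HasDerivWithinAt (fun t : ℝ => t / (1 - t)) ((1 - t)⁻¹ ^ 2) (Ioo 0 1) t := by
    intro t ht
    have hne : (1:ℝ) - t ≠ 0 := by linarith [ht.2]
    refine ((hasDerivAt_id t).div ((hasDerivAt_const t 1).sub (hasDerivAt_id t))
      hne).hasDerivWithinAt.congr_deriv ?_
    simp only [Pi.sub_apply, id]
    field_simp
    ring
  have hinj : InjOn (fun t : ℝ => t / (1 - t)) (Ioo 0 1) := by
    intro t₁ ht₁ t₂ ht₂ heq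
    have hne₁ : (1:ℝ) - t₁ ≠ 0 := by linarith [ht₁.2]
    have hne₂ : (1:ℝ) - t₂ ≠ 0 := by linarith [ht₂.2]
    field_simp at heq
    linarith
  rw [← himage, integral_image_eq_integral_abs_deriv_smul measurableSet_Ioo hderiv hinj,
    ← integral_rpow_mul_one_sub_rpow_Ioo ha hb]
  refine setIntegral_congr_fun measurableSet_Ioo fun t ⟨ht0, ht1⟩ => ?_
  have hs : (0:ℝ) < 1 - t := by linarith
  have hone_add : 1 + t / (1 - t) = (1 - t)⁻¹ := by field_simp; ring
  have hsplit : (1 - t) ^ (a + b) = (1 - t) ^ (a - 1) * (1 - t) ^ (b - 1) * (1 - t) ^ 2 := by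
    rw [← rpow_add hs, ← rpow_natCast, ← rpow_add hs]
    congr 1
    push_cast
    ring
  rw [smul_eq_mul, abs_of_pos (by positivity), hone_add, div_rpow ht0.le hs.le, inv_rpow hs.le,
    ← rpow_neg hs.le, neg_neg, hsplit]
  field_simp

lemma integral_rpow_mul_one_add_div_rpow_Ioi {a b d : ℝ} (ha : 0 < a) (hb : 0 < b) (hd : 0 < d) :
    ∫ x in Ioi (0:ℝ), x ^ (a - 1) * (1 + x / d) ^ (-(a + b))
      = d ^ a * (Gamma a * Gamma b / Gamma (a + b)) := by
  rw [← mul_zero d, ← integral_comp_mul_left_Ioi' _ _ hd, smul_eq_mul,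
    ← integral_rpow_mul_one_add_rpow_Ioi ha hb, ← integral_const_mul, ← integral_const_mul]
  refine setIntegral_congr_fun measurableSet_Ioi fun x (hx : 0 < x) => ?_
  rw [mul_rpow hd.le hx.le, mul_div_cancel_left₀ _ hd.ne', rpow_sub_one hd.ne']
  field_simp

lemma integral_mul_ggPDF {l c d : ℝ} (hl : 0 < l) (hc : 1 < c) (hd : 0 < d) :
    ∫ Ψ in Ioi (0:ℝ), Ψ * ggPDF l c d Ψ = l * d / (c - 1) := by
  have hc' : 0 < c - 1 := by linarith
  have hmoment : ∀ Ψ ∈ Ioi (0:ℝ), Ψ * ggPDF l c d Ψ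
      = (1 / d) ^ l * (Gamma (l + c) / (Gamma l * Gamma c))
        * (Ψ ^ (l + 1 - 1) * (1 + Ψ / d) ^ (-(l + 1 + (c - 1)))) := by
    intro Ψ (hΨ : 0 < Ψ)
    rw [ggPDF, add_sub_cancel_right, rpow_sub_one hΨ.ne', add_add_sub_cancel]
    field_simp
  rw [setIntegral_congr_fun measurableSet_Ioi hmoment, integral_const_mul,
    integral_rpow_mul_one_add_div_rpow_Ioi (by linarith) hc' hd, add_add_sub_cancel,
    Gamma_add_one hl.ne', rpow_add_one hd.ne', one_div, inv_rpow hd.le]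
  have hGc : Gamma c = (c - 1) * Gamma (c - 1) := by rw [← Gamma_add_one hc'.ne', sub_add_cancel]
  rw [hGc]
  field_simp [(Gamma_pos_of_pos hl).ne', (Gamma_pos_of_pos hc').ne',
    (Gamma_pos_of_pos (by linarith : 0 < l + c)).ne', (rpow_pos_of_pos hd l).ne']

/-- The marginal second moment (prior variance) of the normal-gamma-gamma scale mixture
`β | Ψ ∼ N(0, Ψ)`, `Ψ ∼ GG(λ, c, d)` equals `λ d / (c - 1)` when `c > 1`. -/
theorem stmt10 (l c d : ℝ) (hl : 0 < l) (hc : 1 < c) (hd : 0 < d) :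
    ∫ Ψ in Set.Ioi (0:ℝ),
        (∫ β : ℝ, β ^ 2 * ((2 * π * Ψ) ^ (-(1:ℝ)/2) * Real.exp (-(β ^ 2 / (2 * Ψ)))) *
          ggPDF l c d Ψ) = l * d / (c - 1) := by
  rw [← integral_mul_ggPDF hl hc hd]
  refine setIntegral_congr_fun measurableSet_Ioi fun Ψ (hΨ : 0 < Ψ) => ?_
  rw [integral_mul_const, integral_sq_mul_gaussian hΨ]
end

section
/- Let λ, μ, Ψ > 0. Then the GG(λ, c, c/μ) density evaluated at Ψ converges, as c → ∞, to the Gamma(λ, μ) density at Ψ; that is, lim_{c→∞} (μ/c)^λ (Γ(λ+c)/(Γ(λ)Γ(c))) Ψ^{λ−1} (1 + μΨ/c)^{−(λ+c)} = (μ^λ/Γ(λ)) Ψ^{λ−1} e^{−μΨ}. (The normal-gamma distribution arises from the normal-gamma-gamma distribution when c/d = μ and c → ∞.) -/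
/-!
Writing the density as `(μ^λ / Γ(λ)) Ψ^(λ-1) · Γ(c + λ) / (Γ(c) c^λ) · (1 + μΨ/c)^(-(λ+c))`, the last
factor tends to `exp (-μΨ)` by the exponential limit, and the Gamma ratio tends to `1`.
For `0 ≤ s ≤ 1` the latter is Wendel's squeeze `(x / (x + s))^(1-s) ≤ Γ(x + s) / (Γ(x) x^s) ≤ 1`,
both sides coming from the log-convexity of `Γ` applied to `x, x + s, x + 1, x + s + 1`;
larger `s` reduce to this case through `Γ(y + 1) = y Γ(y)`.
-/

open MeasureTheory Real Filter Set

theorem tendsto_one_add_div_atTop (a : ℝ) :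
    Tendsto (fun x : ℝ => 1 + a / x) atTop (nhds 1) := by
  simpa using tendsto_const_nhds.add ((tendsto_const_nhds (x := a)).div_atTop tendsto_id)

theorem tendsto_one_add_div_rpow_neg_add (t l : ℝ) :
    Tendsto (fun c : ℝ => (1 + t / c) ^ (-(l + c))) atTop (nhds (exp (-t))) := by
  have hbase := tendsto_one_add_div_atTop t
  have hshift : Tendsto (fun c : ℝ => (1 + t / c) ^ (-l)) atTop (nhds 1) := by
    simpa using hbase.rpow_const (p := -l) (Or.inl one_ne_zero)
  have h := hshift.mul ((tendsto_one_add_div_rpow_exp t).inv₀ (exp_pos t).ne')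
  rw [one_mul, ← exp_neg] at h
  refine h.congr' ?_
  filter_upwards [hbase.eventually (lt_mem_nhds one_pos)] with c hc
  rw [← rpow_neg hc.le, ← rpow_add hc, neg_add]

namespace Real

theorem Gamma_mul_add_mul_le_rpow_Gamma_mul_rpow_Gamma_of_nonneg {s t a b : ℝ} (hs : 0 < s)
    (ht : 0 < t) (ha : 0 ≤ a) (hb : 0 ≤ b) (hab : a + b = 1) :
    Gamma (a * s + b * t) ≤ Gamma s ^ a * Gamma t ^ b := by
  have hst : 0 < a * s + b * t := convex_Ioi (0 : ℝ) hs ht ha hb hab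
  have hs' := Gamma_pos_of_pos hs
  have ht' := Gamma_pos_of_pos ht
  rw [← log_le_log_iff (Gamma_pos_of_pos hst) (by positivity), log_mul (by positivity)
    (by positivity), log_rpow hs', log_rpow ht']
  exact convexOn_log_Gamma.2 hs ht ha hb hab

theorem Gamma_add_le_Gamma_mul_rpow {x s : ℝ} (hx : 0 < x) (hs₀ : 0 ≤ s) (hs₁ : s ≤ 1) :
    Gamma (x + s) ≤ Gamma x * x ^ s := by
  have hΓ := Gamma_pos_of_pos hx
  have h := Gamma_mul_add_mul_le_rpow_Gamma_mul_rpow_Gamma_of_nonneg (a := 1 - s) (b := s) hx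
    (by linarith : 0 < x + 1) (by linarith) hs₀ (by ring)
  rw [show (1 - s) * x + s * (x + 1) = x + s by ring, Gamma_add_one hx.ne',
    mul_rpow hx.le hΓ.le] at h
  calc Gamma (x + s) ≤ Gamma x ^ (1 - s) * (x ^ s * Gamma x ^ s) := h
    _ = Gamma x ^ (1 - s + s) * x ^ s := by rw [rpow_add hΓ]; ring
    _ = Gamma x * x ^ s := by rw [sub_add_cancel, rpow_one]

theorem mul_Gamma_le_Gamma_add_mul_rpow {x s : ℝ} (hx : 0 < x) (hs₀ : 0 ≤ s) (hs₁ : s ≤ 1) :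
    x * Gamma x ≤ Gamma (x + s) * (x + s) ^ (1 - s) := by
  have hxs : 0 < x + s := by linarith
  have hΓ := Gamma_pos_of_pos hxs
  have h := Gamma_mul_add_mul_le_rpow_Gamma_mul_rpow_Gamma_of_nonneg (a := s) (b := 1 - s) hxs
    (by linarith : 0 < x + s + 1) hs₀ (by linarith) (by ring)
  rw [show s * (x + s) + (1 - s) * (x + s + 1) = x + 1 by ring, Gamma_add_one hx.ne',
    Gamma_add_one hxs.ne', mul_rpow hxs.le hΓ.le] at h
  calc x * Gamma x ≤ Gamma (x + s) ^ s * ((x + s) ^ (1 - s) * Gamma (x + s) ^ (1 - s)) := h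
    _ = Gamma (x + s) ^ (s + (1 - s)) * (x + s) ^ (1 - s) := by rw [rpow_add hΓ]; ring
    _ = Gamma (x + s) * (x + s) ^ (1 - s) := by rw [add_sub_cancel, rpow_one]

theorem div_add_rpow_le_Gamma_add_div_Gamma_mul_rpow {x s : ℝ} (hx : 0 < x) (hs₀ : 0 ≤ s)
    (hs₁ : s ≤ 1) : (x / (x + s)) ^ (1 - s) ≤ Gamma (x + s) / (Gamma x * x ^ s) := by
  have hxs : 0 < x + s := by linarith
  have hΓ := Gamma_pos_of_pos hx
  rw [div_rpow hx.le hxs.le, div_le_div_iff₀ (rpow_pos_of_pos hxs _) (by positivity)]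
  calc x ^ (1 - s) * (Gamma x * x ^ s) = x ^ (1 - s + s) * Gamma x := by rw [rpow_add hx]; ring
    _ = x * Gamma x := by rw [sub_add_cancel, rpow_one]
    _ ≤ Gamma (x + s) * (x + s) ^ (1 - s) := mul_Gamma_le_Gamma_add_mul_rpow hx hs₀ hs₁

theorem tendsto_Gamma_add_div_Gamma_mul_rpow_of_le_one {s : ℝ} (hs₀ : 0 ≤ s) (hs₁ : s ≤ 1) :
    Tendsto (fun x => Gamma (x + s) / (Gamma x * x ^ s)) atTop (nhds 1) := by
  have hfrac : Tendsto (fun x : ℝ => x / (x + s)) atTop (nhds 1) := by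
    refine (inv_one (G := ℝ) ▸ (tendsto_one_add_div_atTop s).inv₀ one_ne_zero).congr' ?_
    filter_upwards [eventually_gt_atTop 0] with x hx
    field_simp
  have hlower : Tendsto (fun x : ℝ => (x / (x + s)) ^ (1 - s)) atTop (nhds 1) := by
    simpa using hfrac.rpow_const (p := 1 - s) (Or.inl one_ne_zero)
  refine tendsto_of_tendsto_of_tendsto_of_le_of_le' hlower tendsto_const_nhds ?_ ?_
  · filter_upwards [eventually_gt_atTop 0] with x hx
    exact div_add_rpow_le_Gamma_add_div_Gamma_mul_rpow hx hs₀ hs₁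
  · filter_upwards [eventually_gt_atTop 0] with x hx
    rw [div_le_one (mul_pos (Gamma_pos_of_pos hx) (rpow_pos_of_pos hx s))]
    exact Gamma_add_le_Gamma_mul_rpow hx hs₀ hs₁

theorem Gamma_add_add_one_div_Gamma_mul_rpow {x s : ℝ} (hx : x ≠ 0) (hxs : x + s ≠ 0) :
    Gamma (x + (s + 1)) / (Gamma x * x ^ (s + 1)) =
      Gamma (x + s) / (Gamma x * x ^ s) * (1 + s / x) := by
  rw [← add_assoc, Gamma_add_one hxs, rpow_add_one hx, one_add_div hx]
  ring

theorem tendsto_Gamma_add_div_Gamma_mul_rpow {s : ℝ} (hs : 0 ≤ s) :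
    Tendsto (fun x => Gamma (x + s) / (Gamma x * x ^ s)) atTop (nhds 1) := by
  suffices h : ∀ n : ℕ, Tendsto (fun x => Gamma (x + (Int.fract s + n)) /
      (Gamma x * x ^ (Int.fract s + n))) atTop (nhds 1) by
    simpa [natCast_floor_eq_intCast_floor hs, Int.fract_add_floor] using h ⌊s⌋₊
  intro n
  induction n with
  | zero => simpa using
      tendsto_Gamma_add_div_Gamma_mul_rpow_of_le_one (Int.fract_nonneg s) (Int.fract_lt_one s).le
  | succ n ih =>
    refine (mul_one (1 : ℝ) ▸ ih.mul (tendsto_one_add_div_atTop (Int.fract s + n))).congr' ?_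
    filter_upwards [eventually_gt_atTop 0] with x hx
    push_cast
    rw [← add_assoc (Int.fract s), Gamma_add_add_one_div_Gamma_mul_rpow hx.ne' (by positivity)]

end Real

theorem stmt12_general (l μ Ψ : ℝ) (hl : 0 < l) (hμ : 0 < μ) :
    Tendsto (fun c : ℝ =>
        (μ / c) ^ l * (Real.Gamma (l + c) / (Real.Gamma l * Real.Gamma c)) *
          Ψ ^ (l - 1) * (1 + μ * Ψ / c) ^ (-(l + c)))
      atTop
      (nhds ((μ ^ l / Real.Gamma l) * Ψ ^ (l - 1) * Real.exp (-(μ * Ψ)))) := by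
  have h := ((tendsto_const_nhds (x := μ ^ l / Gamma l * Ψ ^ (l - 1))).mul
    (Real.tendsto_Gamma_add_div_Gamma_mul_rpow hl.le)).mul
    (tendsto_one_add_div_rpow_neg_add (μ * Ψ) l)
  rw [mul_one] at h
  refine h.congr' ?_
  filter_upwards [eventually_gt_atTop 0] with c hc
  rw [div_rpow hμ.le hc.le, add_comm c l]
  ring

/-- The `GG(λ, c, c/μ)` density at `Ψ` converges, as `c → ∞`, to the `Gamma(λ, μ)`
density at `Ψ`: the normal-gamma distribution arises from the normal-gamma-gamma
distribution when `c/d = μ` and `c → ∞`. -/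
theorem stmt12 (l μ Ψ : ℝ) (hl : 0 < l) (hμ : 0 < μ) (hΨ : 0 < Ψ) :
    Tendsto (fun c : ℝ =>
        (μ / c) ^ l * (Real.Gamma (l + c) / (Real.Gamma l * Real.Gamma c)) *
          Ψ ^ (l - 1) * (1 + μ * Ψ / c) ^ (-(l + c)))
      atTop
      (nhds ((μ ^ l / Real.Gamma l) * Ψ ^ (l - 1) * Real.exp (-(μ * Ψ)))) :=
  stmt12_general l μ Ψ hl hμ
end
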